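/- If {𝒜_k}_{k≥1} is a sequence of labyrinth patterns with widths m_k ≥ 3, then the limit set generated by the sequence of the corresponding complementary patterns {𝒜̄_k}_{k≥1}, where 𝒜̄_k = 𝒮_{m_k} \ 𝒜_k, is a totally disconnected set. -/

import Mathlib

open Set

namespace Labyrinth

/-- The closed square `S_{i,j,m} = [i/m,(i+1)/m] × [j/m,(j+1)/m]` of the `m × m` grid
on the unit square, indexed by `p = (i,j)`. -/
def cell (m : ℕ) (p : ℕ × ℕ) : Set (ℝ × ℝ) :=
  Icc ((p.1 : ℝ) / (m : ℝ)) (((p.1 : ℝ) + 1) / (m : ℝ)) ×ˢ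
    Icc ((p.2 : ℝ) / (m : ℝ)) (((p.2 : ℝ) + 1) / (m : ℝ))

/-- An `m`-pattern: a nonempty set of grid indices within the `m × m` grid. -/
def IsPattern (m : ℕ) (A : Set (ℕ × ℕ)) : Prop :=
  A.Nonempty ∧ ∀ p ∈ A, p.1 < m ∧ p.2 < m

/-- Two grid squares share a side. -/
def SideAdj (p q : ℕ × ℕ) : Prop :=
  (p.1 = q.1 ∧ (p.2 + 1 = q.2 ∨ q.2 + 1 = p.2)) ∨
  (p.2 = q.2 ∧ (p.1 + 1 = q.1 ∨ q.1 + 1 = p.1))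

/-- Two grid squares share a side or a corner. -/
def CornerAdj (p q : ℕ × ℕ) : Prop :=
  SideAdj p q ∨
  ((p.1 + 1 = q.1 ∨ q.1 + 1 = p.1) ∧ (p.2 + 1 = q.2 ∨ q.2 + 1 = p.2))

/-- The graph `𝒢(𝒜)` of a pattern: vertices are its squares, two squares being
adjacent iff they share a side. -/
def patternGraph (A : Set (ℕ × ℕ)) : SimpleGraph ↥A where
  Adj p q := SideAdj p.1 q.1
  symm := by
    refine ⟨?_⟩
    rintro ⟨p, hp⟩ ⟨q, hq⟩ h
    rcases h with ⟨h1, h2⟩ | ⟨h1, h2⟩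
    · exact Or.inl ⟨h1.symm, h2.symm⟩
    · exact Or.inr ⟨h1.symm, h2.symm⟩
  loopless := by
    refine ⟨?_⟩
    rintro ⟨p, hp⟩ h
    rcases h with ⟨h1, h2 | h2⟩ | ⟨h1, h2 | h2⟩ <;> omega

/-- The four sides of a square/pattern. -/
inductive Side | top | bottom | left | right
deriving DecidableEq

/-- `p` is an exit square of the `m`-pattern `A` on the given side. -/
def IsExitSq (m : ℕ) (A : Set (ℕ × ℕ)) : Side → ℕ × ℕ → Prop
  | .top, p => p ∈ A ∧ p.2 = m - 1 ∧ (p.1, 0) ∈ A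
  | .bottom, p => p ∈ A ∧ p.2 = 0 ∧ (p.1, m - 1) ∈ A
  | .left, p => p ∈ A ∧ p.1 = 0 ∧ (m - 1, p.2) ∈ A
  | .right, p => p ∈ A ∧ p.1 = m - 1 ∧ (0, p.2) ∈ A

/-- An `m × m`-labyrinth pattern: a nonempty `m`-pattern, `m ≥ 3`, whose graph is a tree,
with exactly one vertical and exactly one horizontal exit pair, and no two white squares
at diagonally opposite corners. -/
def IsLabyrinthPattern (m : ℕ) (A : Set (ℕ × ℕ)) : Prop :=
  3 ≤ m ∧ IsPattern m A ∧ (patternGraph A).IsTree ∧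
    (∃! i : ℕ, (i, m - 1) ∈ A ∧ (i, 0) ∈ A) ∧
    (∃! j : ℕ, (0, j) ∈ A ∧ (m - 1, j) ∈ A) ∧
    ((0, 0) ∈ A → (m - 1, m - 1) ∉ A) ∧
    ((m - 1, 0) ∈ A → (0, m - 1) ∉ A)

/-- A wild labyrinth pattern: the graph is merely connected, and there is at least one
vertical and at least one horizontal exit pair. -/
def IsWildLabyrinthPattern (m : ℕ) (A : Set (ℕ × ℕ)) : Prop :=
  3 ≤ m ∧ IsPattern m A ∧ (patternGraph A).Connected ∧
    (∃ i : ℕ, (i, m - 1) ∈ A ∧ (i, 0) ∈ A) ∧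
    (∃ j : ℕ, (0, j) ∈ A ∧ (m - 1, j) ∈ A) ∧
    ((0, 0) ∈ A → (m - 1, m - 1) ∉ A) ∧
    ((m - 1, 0) ∈ A → (0, m - 1) ∉ A)

/-- One substitution step: place a copy of the pattern `A'` (of width `m'`) into each
white square of `W`. -/
def subst (m' : ℕ) (A' W : Set (ℕ × ℕ)) : Set (ℕ × ℕ) :=
  {q | ∃ p ∈ W, ∃ r ∈ A', q = (p.1 * m' + r.1, p.2 * m' + r.2)}

/-- The white squares `𝒲_n` of level `n`; `whites m A n` is the paper's `𝒲_n`, where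
`A k` is the paper's pattern `𝒜_{k+1}` of width `m k = m_{k+1}`; level `0` is the whole
unit square. -/
def whites (m : ℕ → ℕ) (A : ℕ → Set (ℕ × ℕ)) : ℕ → Set (ℕ × ℕ)
  | 0 => {(0, 0)}
  | n + 1 => subst (m n) (A n) (whites m A n)

/-- `m(n) = m_1 ⋯ m_n`. -/
def mProd (m : ℕ → ℕ) (n : ℕ) : ℕ := ∏ k ∈ Finset.range n, m k

/-- The black squares `ℬ_n` of level `n`. -/
def blacks (m : ℕ → ℕ) (A : ℕ → Set (ℕ × ℕ)) (n : ℕ) : Set (ℕ × ℕ) :=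
  {p : ℕ × ℕ | p.1 < mProd m n ∧ p.2 < mProd m n} \ whites m A n

/-- A border square of the `m × m` grid. -/
def IsBorder (m : ℕ) (p : ℕ × ℕ) : Prop :=
  p.1 = 0 ∨ p.2 = 0 ∨ p.1 = m - 1 ∨ p.2 = m - 1

/-- `L_n`, the union of the white squares of level `n`. -/
def levelSet (m : ℕ → ℕ) (A : ℕ → Set (ℕ × ℕ)) (n : ℕ) : Set (ℝ × ℝ) :=
  ⋃ p ∈ whites m A n, cell (mProd m n) p

/-- `L_∞ = ⋂_{n ≥ 1} L_n` (the term `n = 0` is the whole unit square). -/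
def limitSet (m : ℕ → ℕ) (A : ℕ → Set (ℕ × ℕ)) : Set (ℝ × ℝ) :=
  ⋂ n, levelSet m A n

def unitSquare : Set (ℝ × ℝ) := Icc (0 : ℝ) 1 ×ˢ Icc (0 : ℝ) 1

/-- A path in a graph (with adjacency `Adj`, within the vertex set `A`)
from `u` to `v`: a nonempty list of distinct, consecutively adjacent squares of `A`,
starting at `u` and ending at `v`. -/
def IsPathIn (Adj : ℕ × ℕ → ℕ × ℕ → Prop) (A : Set (ℕ × ℕ))
    (l : List (ℕ × ℕ)) (u v : ℕ × ℕ) : Prop :=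
  l ≠ [] ∧ l.Nodup ∧ l.Chain' Adj ∧ (∀ p ∈ l, p ∈ A) ∧
    l.head? = some u ∧ l.getLast? = some v

/-- `s` is an arc between `a` and `b`: a homeomorphic image of `[0,1]`
with endpoints `a` and `b`. -/
def IsArc (s : Set (ℝ × ℝ)) (a b : ℝ × ℝ) : Prop :=
  ∃ f : ℝ → ℝ × ℝ, ContinuousOn f (Icc 0 1) ∧ InjOn f (Icc 0 1) ∧
    f '' Icc 0 1 = s ∧ f 0 = a ∧ f 1 = b

/-- `e` is the exit point of `L_∞` of the given type: for every `n ≥ 1` it lies in the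
exit square of that type of `𝒲_n`. -/
def IsExitPoint (m : ℕ → ℕ) (A : ℕ → Set (ℕ × ℕ)) (s : Side) (e : ℝ × ℝ) : Prop :=
  ∀ n, 1 ≤ n → ∃ p, IsExitSq (mProd m n) (whites m A n) s p ∧ e ∈ cell (mProd m n) p

/-- The (closed) edge of the grid square `p` of the `m × m` grid on the given side. -/
def cellEdge (m : ℕ) (p : ℕ × ℕ) : Side → Set (ℝ × ℝ)
  | .top => Icc ((p.1 : ℝ) / (m : ℝ)) (((p.1 : ℝ) + 1) / (m : ℝ)) ×ˢ {((p.2 : ℝ) + 1) / (m : ℝ)}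
  | .bottom => Icc ((p.1 : ℝ) / (m : ℝ)) (((p.1 : ℝ) + 1) / (m : ℝ)) ×ˢ {(p.2 : ℝ) / (m : ℝ)}
  | .left => {(p.1 : ℝ) / (m : ℝ)} ×ˢ Icc ((p.2 : ℝ) / (m : ℝ)) (((p.2 : ℝ) + 1) / (m : ℝ))
  | .right => {((p.1 : ℝ) + 1) / (m : ℝ)} ×ˢ Icc ((p.2 : ℝ) / (m : ℝ)) (((p.2 : ℝ) + 1) / (m : ℝ))

/-- Directions in the grid. -/
inductive Dir | up | down | left | right
deriving DecidableEq

/-- `stepDir p q d`: the square `q` is the neighbour of `p` in direction `d`. -/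
def stepDir (p q : ℕ × ℕ) : Dir → Prop
  | .up => q.1 = p.1 ∧ q.2 = p.2 + 1
  | .down => q.1 = p.1 ∧ p.2 = q.2 + 1
  | .left => q.2 = p.2 ∧ p.1 = q.1 + 1
  | .right => q.2 = p.2 ∧ q.1 = p.1 + 1

/-- The outward direction through a given side. -/
def outDir : Side → Dir
  | .top => .up
  | .bottom => .down
  | .left => .left
  | .right => .right

def sideOfDir : Dir → Side
  | .up => .top
  | .down => .bottom
  | .left => .left
  | .right => .right

/-- The six types `A, B, C, D, E, F` of paths (and of squares within a path). -/
inductive PTy | A | B | C | D | E | F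
deriving DecidableEq

instance : Fintype PTy := ⟨⟨{.A, .B, .C, .D, .E, .F}, by decide⟩, fun x => by cases x <;> decide⟩

/-- The exit at which the `x`-path starts: `A`: top→bottom, `B`: left→right,
`C`: top→right, `D`: right→bottom, `E`: bottom→left, `F`: left→top. -/
def startSide : PTy → Side
  | .A => .top
  | .B => .left
  | .C => .top
  | .D => .right
  | .E => .bottom
  | .F => .left

/-- The exit at which the `x`-path ends. -/
def endSide : PTy → Side
  | .A => .bottom
  | .B => .right
  | .C => .right
  | .D => .bottom
  | .E => .left
  | .F => .top

/-- The two neighbour directions characterising a square of each type. -/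
def ptyDirPair : PTy → Dir × Dir
  | .A => (.up, .down)
  | .B => (.left, .right)
  | .C => (.up, .right)
  | .D => (.right, .down)
  | .E => (.down, .left)
  | .F => (.left, .up)

def ptyDirs (τ : PTy) : Set Dir := {(ptyDirPair τ).1, (ptyDirPair τ).2}

/-- The set of directions from the `i`-th square of the path `l` towards its neighbours
within the path, where the first and last squares (exit squares) are regarded as having
an additional neighbour outside the unit square, in directions `dstart`, `dend`
respectively. -/
def pathDirs (l : List (ℕ × ℕ)) (dstart dend : Dir) (i : ℕ) : Set Dir :=
  {d | (∃ p q, l[i]? = some p ∧ l[i - 1]? = some q ∧ 0 < i ∧ stepDir p q d)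
    ∨ (∃ p q, l[i]? = some p ∧ l[i + 1]? = some q ∧ stepDir p q d)
    ∨ (i = 0 ∧ d = dstart)
    ∨ (i + 1 = l.length ∧ d = dend)}

/-- The number of `τ`-squares of the path `l` (with outward exit directions
`dstart`, `dend`). -/
noncomputable def countTy (l : List (ℕ × ℕ)) (dstart dend : Dir) (τ : PTy) : ℕ :=
  {i | i < l.length ∧ pathDirs l dstart dend i = ptyDirs τ}.ncard

/-- `M(n) = M_1 ⋅ M_2 ⋅ ⋯ ⋅ M_n`. -/
def matProd (M : ℕ → Matrix PTy PTy ℕ) (n : ℕ) : Matrix PTy PTy ℕ :=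
  ((List.range n).map M).prod

/-- A simple closed curve: a subspace homeomorphic to the circle. -/
def IsSimpleClosedCurve (s : Set (ℝ × ℝ)) : Prop :=
  Nonempty (↥s ≃ₜ AddCircle (1 : ℝ))

/-- The number of `δ`-mesh squares meeting `E`. -/
noncomputable def meshCount (δ : ℝ) (E : Set (ℝ × ℝ)) : ℕ :=
  {q : ℤ × ℤ | (E ∩ (Icc ((q.1 : ℝ) * δ) (((q.1 : ℝ) + 1) * δ) ×ˢ
      Icc ((q.2 : ℝ) * δ) (((q.2 : ℝ) + 1) * δ))).Nonempty}.ncard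

/-- The lower box-counting dimension of `E ⊆ ℝ²`. -/
noncomputable def lowerBoxDim (E : Set (ℝ × ℝ)) : ℝ :=
  Filter.liminf (fun δ : ℝ => Real.log (meshCount δ E) / (-Real.log δ)) (nhdsWithin 0 (Ioi 0))

/-- The upper box-counting dimension of `E ⊆ ℝ²`. -/
noncomputable def upperBoxDim (E : Set (ℝ × ℝ)) : ℝ :=
  Filter.limsup (fun δ : ℝ => Real.log (meshCount δ E) / (-Real.log δ)) (nhdsWithin 0 (Ioi 0))

end Labyrinth

/-!
Let `x ≠ y` lie in a preconnected subset `t` of the limit set, say `x.1 < y.1`; the case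
`x.2 < y.2` is the same after transposing every pattern. In a labyrinth pattern the tree
`𝒢(𝒜_k)` joins the two squares of its vertical exit pair, so the complementary pattern has a
side-adjacent path of black squares from the bottom row to the top row, starting and ending in
the same column. Choose a level `n` at which some column of level `n` lies strictly between
`x.1` and `y.1`. Stacking copies of this path for `𝒜_{n+1}` in that column gives a bottom-to-top
path of black squares of level `n + 1`, and the rectilinear polygon through their centres,
closed up around the left of the unit square, avoids the white squares of level `n + 1`, hence
`t`. The parity of the number of edges of this polygon met by the horizontal ray running to the
right from a point is locally constant off the polygon, so constant on `t`; but it is `1` at `x`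
and `0` at `y`.
-/

namespace List

variable {α : Type*}

theorem isChain_iff_forall_mem_consecutivePairs {R : α → α → Prop} {l : List α} :
    l.IsChain R ↔ ∀ e ∈ l.consecutivePairs, R e.1 e.2 := by
  induction l with
  | nil => simp
  | cons a l ih =>
    cases l with
    | nil => simp [consecutivePairs]
    | cons b l => simp_all [isChain_cons_cons, consecutivePairs]

theorem consecutivePairs_map {β : Type*} (f : α → β) (l : List α) :
    (l.map f).consecutivePairs = l.consecutivePairs.map (Prod.map f f) := by
  simp only [consecutivePairs, ← map_tail, zip_map]

theorem consecutivePairs_append_tail {l₁ l₂ : List α} (h : l₁.getLast? = l₂.head?) :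
    (l₁ ++ l₂.tail).consecutivePairs = l₁.consecutivePairs ++ l₂.consecutivePairs := by
  induction l₁ with
  | nil => cases l₂ <;> simp_all [consecutivePairs]
  | cons a l ih =>
    cases l with
    | nil => cases l₂ <;> simp_all [consecutivePairs]
    | cons b l => simp_all [consecutivePairs]

theorem sum_map_consecutivePairs_sub {G : Type*} [AddCommGroup G] (f : α → G) (a : α)
    (l : List α) :
    ((a :: l).consecutivePairs.map fun e => f e.2 - f e.1).sum =
      f ((a :: l).getLast (cons_ne_nil a l)) - f a := by
  induction l generalizing a with
  | nil => simp [consecutivePairs]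
  | cons b l ih => simp_all [consecutivePairs]

end List

namespace Labyrinth

open Filter Topology Metric

/-- An edge is taken as the closed box spanned by its endpoints, which is the segment between them
when they are axis-parallel. -/
def polygonSet (L : List (ℝ × ℝ)) : Set (ℝ × ℝ) := ⋃ e ∈ L.consecutivePairs, uIcc e.1 e.2

/-- The ray is the horizontal one from `z` to the right; a vertex at its height counts as lying
below it. -/
noncomputable def rayCrossing (z p q : ℝ × ℝ) : ZMod 2 :=
  if ¬(z.2 < p.2 ↔ z.2 < q.2) ∧ z.1 < p.1 then 1 else 0

noncomputable def rayParity (L : List (ℝ × ℝ)) (z : ℝ × ℝ) : ZMod 2 :=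
  (L.consecutivePairs.map fun e => rayCrossing z e.1 e.2).sum

def IsRectilinear (L : List (ℝ × ℝ)) : Prop := L.IsChain fun p q => p.1 = q.1 ∨ p.2 = q.2

section RayParity

variable {L : List (ℝ × ℝ)}

lemma IsRectilinear.map_swap (hL : IsRectilinear L) :
    IsRectilinear (L.map Prod.swap) :=
  List.isChain_map _ |>.mpr <| hL.imp fun _ _ => Or.symm

lemma IsRectilinear.fst_eq_or_snd_eq (hL : IsRectilinear L) {e : (ℝ × ℝ) × (ℝ × ℝ)}
    (he : e ∈ L.consecutivePairs) : e.1.1 = e.2.1 ∨ e.1.2 = e.2.2 :=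
  List.isChain_iff_forall_mem_consecutivePairs.mp hL e he

lemma swap_mem_uIcc_swap {p q z : ℝ × ℝ} : z.swap ∈ uIcc p.swap q.swap ↔ z ∈ uIcc p q := by
  rw [uIcc_prod_eq, uIcc_prod_eq]
  exact and_comm

lemma swap_mem_polygonSet_map_swap {z : ℝ × ℝ} :
    z.swap ∈ polygonSet (L.map Prod.swap) ↔ z ∈ polygonSet L := by
  simp only [polygonSet, List.consecutivePairs_map, mem_iUnion, List.mem_map, exists_prop]
  constructor
  · rintro ⟨_, ⟨e, he, rfl⟩, hz⟩
    exact ⟨e, he, swap_mem_uIcc_swap.mp hz⟩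
  · rintro ⟨e, he, hz⟩
    exact ⟨_, ⟨e, he, rfl⟩, swap_mem_uIcc_swap.mpr hz⟩

lemma isClosed_polygonSet (L : List (ℝ × ℝ)) : IsClosed (polygonSet L) :=
  (List.finite_toSet _).isClosed_biUnion fun e _ => isClosed_Icc (a := e.1 ⊓ e.2)

lemma rayCrossing_add_rayCrossing_swap {p q : ℝ × ℝ} (z : ℝ × ℝ) (hpq : p.1 = q.1 ∨ p.2 = q.2) :
    rayCrossing z p q + rayCrossing z.swap p.swap q.swap =
      (if z.1 < q.1 ∧ z.2 < q.2 then 1 else 0) - (if z.1 < p.1 ∧ z.2 < p.2 then 1 else 0) := by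
  unfold rayCrossing
  simp only [Prod.fst_swap, Prod.snd_swap]
  rcases hpq with h | h <;> simp only [h] <;>
    by_cases h1 : z.1 < q.1 <;> by_cases h2 : z.2 < q.2 <;> by_cases h3 : z.1 < p.1 <;>
    by_cases h4 : z.2 < p.2 <;> simp [h1, h2, h3, h4]

/-- The left side is the parity for the vertical ray from `z` upwards. On each edge of a
rectilinear polygon the two crossings add up to the change of the indicator of the open quadrant
to the upper right of `z`, so around a closed polygon they agree. -/
lemma rayParity_map_swap (hclosed : L.head? = L.getLast?)
    (hL : IsRectilinear L) (z : ℝ × ℝ) : rayParity (L.map Prod.swap) z.swap = rayParity L z := by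
  obtain _ | ⟨a, l⟩ := L
  · rfl
  have hsum : rayParity (a :: l) z + rayParity ((a :: l).map Prod.swap) z.swap = 0 := by
    rw [rayParity, rayParity, List.consecutivePairs_map, List.map_map, ← List.sum_map_add]
    simp only [Function.comp_def, Prod.map_fst, Prod.map_snd]
    rw [List.map_congr_left fun e he =>
      rayCrossing_add_rayCrossing_swap z (hL.fst_eq_or_snd_eq he)]
    refine (List.sum_map_consecutivePairs_sub
      (fun r : ℝ × ℝ => if z.1 < r.1 ∧ z.2 < r.2 then (1 : ZMod 2) else 0) a l).trans ?_
    rw [List.head?_cons, List.getLast?_eq_some_getLast (by simp), Option.some_inj] at hclosed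
    rw [← hclosed, sub_self]
  have hZ2 : ∀ x y : ZMod 2, x + y = 0 → y = x := by decide
  exact hZ2 _ _ hsum

lemma rayCrossing_eq_of_forall_notMem {p q z w : ℝ × ℝ} (hpq : p.1 = q.1 ∨ p.2 = q.2)
    (hzw : z.2 = w.2) (h : ∀ x ∈ uIcc z.1 w.1, (x, z.2) ∉ uIcc p q) :
    rayCrossing z p q = rayCrossing w p q := by
  unfold rayCrossing
  by_cases hcross : z.2 < p.2 ↔ z.2 < q.2
  · simp [hcross, ← hzw]
  have hvert : p.1 = q.1 := hpq.resolve_right fun h => hcross (by rw [h])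
  have hmem : (p.1, z.2) ∈ uIcc p q := by
    rw [uIcc_prod_eq]
    refine ⟨by simp [hvert], ?_⟩
    grind [mem_uIcc]
  have hside : z.1 < p.1 ↔ w.1 < p.1 := by
    have hp : p.1 ∉ uIcc z.1 w.1 := fun hx => h _ hx hmem
    grind [mem_uIcc]
  simp only [← hzw, hcross, hside]

lemma rayParity_eq_of_forall_notMem (hL : IsRectilinear L) {z w : ℝ × ℝ}
    (hzw : z.2 = w.2) (h : ∀ x ∈ uIcc z.1 w.1, (x, z.2) ∉ polygonSet L) :
    rayParity L z = rayParity L w := by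
  refine congrArg List.sum (List.map_congr_left fun e he => ?_)
  exact rayCrossing_eq_of_forall_notMem (hL.fst_eq_or_snd_eq he) hzw fun x hx hxe =>
    h x hx (mem_biUnion he hxe)

/-- Move horizontally, then vertically; the vertical move is a horizontal one for the transposed
polygon by `rayParity_map_swap`. -/
lemma eventually_rayParity_eq (hclosed : L.head? = L.getLast?)
    (hL : IsRectilinear L) {z : ℝ × ℝ} (hz : z ∉ polygonSet L) :
    ∀ᶠ w in 𝓝 z, rayParity L w = rayParity L z := by
  obtain ⟨ε, hε, hball⟩ := Metric.isOpen_iff.mp (isClosed_polygonSet L).isOpen_compl z hz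
  filter_upwards [ball_mem_nhds z hε] with w hw
  rw [← ball_prod_same] at hw hball
  have hI : ∀ {a b : ℝ}, b ∈ ball a ε → uIcc a b ⊆ ball a ε := fun {a b} hb => by
    rw [Real.ball_eq_Ioo] at hb ⊢
    exact ordConnected_Ioo.uIcc_subset ⟨by linarith, by linarith⟩ hb
  calc rayParity L w = rayParity (L.map Prod.swap) w.swap := (rayParity_map_swap hclosed hL w).symm
    _ = rayParity (L.map Prod.swap) (z.2, w.1) := by
      refine rayParity_eq_of_forall_notMem hL.map_swap rfl fun y hy hyL => ?_
      refine hball (show (w.1, y) ∈ ball z.1 ε ×ˢ ball z.2 ε from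
        ⟨hw.1, hI hw.2 (by rwa [uIcc_comm])⟩) ?_
      exact (swap_mem_polygonSet_map_swap (z := (w.1, y))).mp hyL
    _ = rayParity L (w.1, z.2) := rayParity_map_swap hclosed hL (w.1, z.2)
    _ = rayParity L z := by
      refine rayParity_eq_of_forall_notMem hL rfl fun x hx hxL => ?_
      exact hball (show (x, z.2) ∈ ball z.1 ε ×ˢ ball z.2 ε from
        ⟨hI hw.1 (by rwa [uIcc_comm]), mem_ball_self hε⟩) hxL

lemma rayParity_eq_of_isPreconnected (hclosed : L.head? = L.getLast?) (hL : IsRectilinear L)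
    {t : Set (ℝ × ℝ)} (ht : IsPreconnected t) (htL : Disjoint t (polygonSet L)) {z w : ℝ × ℝ}
    (hz : z ∈ t) (hw : w ∈ t) : rayParity L z = rayParity L w := by
  set U : ZMod 2 → Set (ℝ × ℝ) := fun c => {x | x ∉ polygonSet L ∧ rayParity L x = c}
  have hU : ∀ c, IsOpen (U c) := fun c =>
    isOpen_iff_mem_nhds.mpr fun x ⟨hx, hxc⟩ =>
      inter_mem ((isClosed_polygonSet L).isOpen_compl.mem_nhds hx)
        ((eventually_rayParity_eq hclosed hL hx).mono fun _ h => h.trans hxc)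
  have hZ2 : ∀ x y : ZMod 2, x ≠ y + 1 ↔ x = y := by decide
  have hcover : t ⊆ U (rayParity L z) ∪ U (rayParity L z + 1) := fun x hx => by
    have hxL : x ∉ polygonSet L := htL.notMem_of_mem_left hx
    by_cases hc : rayParity L x = rayParity L z + 1
    · exact Or.inr ⟨hxL, hc⟩
    · exact Or.inl ⟨hxL, (hZ2 _ _).mp hc⟩
  have hdisj : Disjoint (U (rayParity L z)) (U (rayParity L z + 1)) :=
    disjoint_left.mpr fun x hx hx' => (hZ2 _ _).mpr hx.2 hx'.2
  have hz' : z ∈ t ∩ U (rayParity L z) := ⟨hz, htL.notMem_of_mem_left hz, rfl⟩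
  exact (ht.subset_left_of_subset_union (hU _) (hU _) hdisj hcover ⟨z, hz'⟩ hw).2.symm

lemma rayParity_eq_zero_of_forall_fst_le {z : ℝ × ℝ}
    (h : ∀ p ∈ L, p.1 ≤ z.1) : rayParity L z = 0 :=
  List.sum_eq_zero fun _ hx => by
    obtain ⟨e, he, rfl⟩ := List.mem_map.mp hx
    simp [rayCrossing, (h _ (List.of_mem_zip he).1).not_gt]

lemma rayParity_eq_zero_of_forall_lt_snd {z : ℝ × ℝ}
    (h : ∀ p ∈ L, z.2 < p.2) : rayParity L z = 0 :=
  List.sum_eq_zero fun _ hx => by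
    obtain ⟨e, he, rfl⟩ := List.mem_map.mp hx
    have he' := List.of_mem_zip he
    simp [rayCrossing, h _ he'.1, h _ (List.mem_of_mem_tail he'.2)]

lemma rayParity_append_tail {l₁ l₂ : List (ℝ × ℝ)} (h : l₁.getLast? = l₂.head?) (z : ℝ × ℝ) :
    rayParity (l₁ ++ l₂.tail) z = rayParity l₁ z + rayParity l₂ z := by
  rw [rayParity, List.consecutivePairs_append_tail h, List.map_append, List.sum_append]
  rfl

end RayParity

/-- Integer indices also name the squares outside the unit square. -/
noncomputable def cellCenter (M : ℕ) (P : ℤ × ℤ) : ℝ × ℝ := ((P.1 + 1 / 2) / M, (P.2 + 1 / 2) / M)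

def toZ (p : ℕ × ℕ) : ℤ × ℤ := (p.1, p.2)

lemma int_mem_uIcc_of_mem_Icc {M : ℝ} (hM : 0 < M) {a b k : ℤ} {y : ℝ}
    (hy : y ∈ uIcc ((a + 1 / 2) / M) ((b + 1 / 2) / M)) (hk : y ∈ Icc (k / M) ((k + 1) / M)) :
    k ∈ uIcc a b := by
  have key : ∀ {c : ℤ}, (c + 1 / 2) / M ≤ y → c ≤ k := fun {c} hc => by
    have : ((c : ℝ) + 1 / 2) / M ≤ (k + 1) / M := hc.trans hk.2
    rw [div_le_div_iff_of_pos_right hM] at this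
    have : (c : ℝ) < k + 1 := by linarith
    exact_mod_cast Int.lt_add_one_iff.mp (by exact_mod_cast this)
  have key' : ∀ {c : ℤ}, y ≤ (c + 1 / 2) / M → k ≤ c := fun {c} hc => by
    have : (k : ℝ) / M ≤ (c + 1 / 2) / M := hk.1.trans hc
    rw [div_le_div_iff_of_pos_right hM] at this
    have : (k : ℝ) < c + 1 := by linarith
    exact_mod_cast Int.lt_add_one_iff.mp (by exact_mod_cast this)
  rcases mem_uIcc.mp hy with h | h
  · exact mem_uIcc.mpr (Or.inl ⟨key h.1, key' h.2⟩)
  · exact mem_uIcc.mpr (Or.inr ⟨key h.1, key' h.2⟩)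

lemma toZ_mem_uIcc_of_mem_cell {M : ℕ} (hM : 0 < M) {P Q : ℤ × ℤ} {w : ℕ × ℕ} {z : ℝ × ℝ}
    (hz : z ∈ uIcc (cellCenter M P) (cellCenter M Q)) (hw : z ∈ cell M w) :
    toZ w ∈ uIcc P Q := by
  have hM' : (0 : ℝ) < M := by exact_mod_cast hM
  rw [uIcc_prod_eq] at hz ⊢
  refine ⟨int_mem_uIcc_of_mem_Icc hM' hz.1 ?_, int_mem_uIcc_of_mem_Icc hM' hz.2 ?_⟩
  · simpa [toZ] using hw.1
  · simpa [toZ] using hw.2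

def IsBlackSegment (white : Set (ℕ × ℕ)) (P Q : ℤ × ℤ) : Prop :=
  (P.1 = Q.1 ∨ P.2 = Q.2) ∧ ∀ w ∈ white, toZ w ∉ uIcc P Q

lemma isBlackSegment_of_sideAdj {white : Set (ℕ × ℕ)} {p q : ℕ × ℕ} (hpq : SideAdj p q)
    (hp : p ∉ white) (hq : q ∉ white) : IsBlackSegment white (toZ p) (toZ q) := by
  refine ⟨by rcases hpq with h | h <;> simp [toZ, h.1], fun w hw hwpq => ?_⟩
  rw [uIcc_prod_eq, mem_prod, mem_uIcc, mem_uIcc] at hwpq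
  simp only [toZ] at hwpq
  have : w = p ∨ w = q := by
    obtain ⟨w1, w2⟩ := w; obtain ⟨p1, p2⟩ := p; obtain ⟨q1, q2⟩ := q
    simp only [SideAdj, Prod.mk.injEq] at hpq hwpq ⊢
    omega
  rcases this with rfl | rfl <;> contradiction

section BlackPolygon

variable {M : ℕ} {white : Set (ℕ × ℕ)} {C : List (ℤ × ℤ)}

lemma isRectilinear_map_cellCenter (hC : C.IsChain (IsBlackSegment white)) :
    IsRectilinear (C.map (cellCenter M)) :=
  List.isChain_map _ |>.mpr <| hC.imp fun P Q h => by
    rcases h.1 with h | h <;> simp [cellCenter, h]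

lemma disjoint_cell_polygonSet (hM : 0 < M) (hC : C.IsChain (IsBlackSegment white)) {w : ℕ × ℕ}
    (hw : w ∈ white) : Disjoint (cell M w) (polygonSet (C.map (cellCenter M))) := by
  refine disjoint_left.mpr fun z hzw hz => ?_
  simp only [polygonSet, List.consecutivePairs_map, mem_iUnion, List.mem_map] at hz
  obtain ⟨_, ⟨e, he, rfl⟩, hze⟩ := hz
  exact (List.isChain_iff_forall_mem_consecutivePairs.mp hC e he).2 w hw
    (toZ_mem_uIcc_of_mem_cell hM hze hzw)

end BlackPolygon

/-- For a `wall` running from `(X, 0)` to `(X, M - 1)`: the closed path of squares along it,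
closed up around the left of the unit square through squares outside it. -/
def framePolygon (M X : ℕ) (wall : List (ℕ × ℕ)) : List (ℤ × ℤ) :=
  ((X : ℤ), -1) :: wall.map toZ ++ [((X : ℤ), (M : ℤ)), (-1, M), (-1, -1), (X, -1)]

section Frame

variable {M X : ℕ} {white : Set (ℕ × ℕ)} {wall : List (ℕ × ℕ)}

lemma head?_eq_getLast?_map_framePolygon :
    ((framePolygon M X wall).map (cellCenter M)).head? =
      ((framePolygon M X wall).map (cellCenter M)).getLast? := by
  rw [List.head?_map, List.getLast?_map, framePolygon, List.getLast?_append]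
  rfl

lemma isChain_framePolygon (hwhite : ∀ w ∈ white, w.1 < M ∧ w.2 < M)
    (hwall : wall.IsChain SideAdj) (hblack : ∀ p ∈ wall, p ∉ white)
    (hhead : wall.head? = some (X, 0)) (hlast : wall.getLast? = some (X, M - 1)) :
    (framePolygon M X wall).IsChain (IsBlackSegment white) := by
  have hends : ∀ w ∈ white, ¬(w.1 = X ∧ w.2 = 0) ∧ ¬(w.1 = X ∧ w.2 = M - 1) := fun w hw =>
    ⟨fun ⟨h₁, h₂⟩ => hblack _ (List.mem_of_mem_head? hhead) (by rw [← h₁, ← h₂]; exact hw),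
      fun ⟨h₁, h₂⟩ => hblack _ (List.mem_of_getLast? hlast) (by rw [← h₁, ← h₂]; exact hw)⟩
  have hseg : ∀ P Q : ℤ × ℤ, (P.1 = Q.1 ∨ P.2 = Q.2) →
      (∀ w : ℕ × ℕ, w.1 < M → w.2 < M → ¬(w.1 = X ∧ w.2 = 0) → ¬(w.1 = X ∧ w.2 = M - 1) →
        ¬((P.1 ≤ w.1 ∧ w.1 ≤ Q.1 ∨ Q.1 ≤ w.1 ∧ w.1 ≤ P.1) ∧
          (P.2 ≤ w.2 ∧ w.2 ≤ Q.2 ∨ Q.2 ≤ w.2 ∧ w.2 ≤ P.2))) →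
      IsBlackSegment white P Q := fun P Q hPQ h => ⟨hPQ, fun w hw => by
    rw [uIcc_prod_eq, mem_prod, mem_uIcc, mem_uIcc]
    exact h w (hwhite w hw).1 (hwhite w hw).2 (hends w hw).1 (hends w hw).2⟩
  have hwallZ : (wall.map toZ).IsChain (IsBlackSegment white) :=
    List.isChain_map _ |>.mpr <| hwall.imp_of_mem_imp fun p q hp hq h =>
      isBlackSegment_of_sideAdj h (hblack p hp) (hblack q hq)
  refine List.isChain_append.mpr ⟨hwallZ.cons ?_, ?_, ?_⟩
  · rw [List.head?_map, hhead]
    rintro _ ⟨⟩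
    exact hseg _ _ (by simp [toZ]) fun w _ _ h _ => by simp [toZ]; omega
  · simp only [List.isChain_cons_cons, List.isChain_singleton, and_true]
    refine ⟨hseg _ _ (by simp) fun w _ h _ _ => ?_, hseg _ _ (by simp) fun w _ _ _ _ => ?_,
      hseg _ _ (by simp) fun w _ _ _ _ => ?_⟩ <;> omega
  · rw [List.getLast?_cons, List.getLast?_map, hlast]
    rintro _ ⟨⟩ _ ⟨⟩
    exact hseg _ _ (by simp [toZ]) fun w _ h _ _ => by simp [toZ]; omega

lemma rayParity_framePolygon_eq_zero {X₁ : ℕ} (hM : 0 < M) (hhead : wall.head? = some (X, 0))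
    (hcol : ∀ p ∈ wall, p.1 < X₁) {b : ℝ × ℝ} (hb : X₁ / M ≤ b.1) :
    rayParity ((framePolygon M X wall).map (cellCenter M)) b = 0 := by
  have hX : X < X₁ := hcol _ (List.mem_of_mem_head? hhead)
  have hM' : (0 : ℝ) < M := by exact_mod_cast hM
  refine rayParity_eq_zero_of_forall_fst_le fun p hp => ?_
  obtain ⟨P, hP, rfl⟩ := List.mem_map.mp hp
  have hP₁ : P.1 + 1 ≤ X₁ := by
    simp only [framePolygon, List.cons_append, List.mem_cons, List.mem_append, List.mem_map,
      List.not_mem_nil, or_false] at hP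
    rcases hP with rfl | ⟨q, hq, rfl⟩ | rfl | rfl | rfl | rfl <;> simp [toZ] <;>
      first | omega | exact hcol q hq
  refine le_trans ?_ hb
  rw [cellCenter, div_le_div_iff_of_pos_right hM']
  have : (P.1 : ℝ) + 1 ≤ X₁ := by exact_mod_cast hP₁
  linarith

lemma rayParity_framePolygon_eq_one {X₀ : ℕ} (hM : 0 < M)
    (hL : IsRectilinear ((framePolygon M X wall).map (cellCenter M)))
    (hhead : wall.head? = some (X, 0)) (hcol : ∀ p ∈ wall, X₀ ≤ p.1) {a : ℝ × ℝ}
    (ha : a ∈ unitSquare) (haX : a.1 < X₀ / M) :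
    rayParity ((framePolygon M X wall).map (cellCenter M)) a = 1 := by
  have hM' : (0 : ℝ) < M := by exact_mod_cast hM
  have hcenter : ∀ c : ℤ, X₀ ≤ c → a.1 < (c + 1 / 2) / M := fun c hc => by
    refine haX.trans_le ?_
    rw [div_le_div_iff_of_pos_right hM']
    have : (X₀ : ℝ) ≤ c := by exact_mod_cast hc
    linarith
  have hX : X₀ ≤ X := hcol _ (List.mem_of_mem_head? hhead)
  set f : ℤ × ℤ → ℝ × ℝ := Prod.swap ∘ cellCenter M
  set front := (((X : ℤ), -1) :: wall.map toZ ++ [((X : ℤ), (M : ℤ))]).map f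
  set back := [((X : ℤ), (M : ℤ)), (-1, M), (-1, -1), (X, -1)].map f
  have hsplit :
      ((framePolygon M X wall).map (cellCenter M)).map Prod.swap = front ++ back.tail := by
    simp [framePolygon, front, back, f]
  have hfront : rayParity front a.swap = 0 := by
    refine rayParity_eq_zero_of_forall_lt_snd fun p hp => ?_
    obtain ⟨P, hP, rfl⟩ := List.mem_map.mp hp
    refine hcenter P.1 ?_
    simp only [List.cons_append, List.mem_cons, List.mem_append, List.mem_map,
      List.not_mem_nil, or_false] at hP
    rcases hP with rfl | ⟨q, hq, rfl⟩ | rfl <;> simp [toZ] <;> first | omega | exact hcol q hq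
  have hback : rayParity back a.swap = 1 := by
    obtain ⟨⟨ha₁, -⟩, ha₂, ha₂'⟩ := ha
    have hlow : ((-1 : ℝ) + 2⁻¹) / M < 0 := div_neg_of_neg_of_pos (by norm_num) hM'
    have hhigh : a.2 < ((M : ℝ) + 2⁻¹) / M := by
      rw [lt_div_iff₀ hM']
      nlinarith
    have hX' : a.1 < ((X : ℝ) + 2⁻¹) / M := by simpa using hcenter X (by exact_mod_cast hX)
    simp [back, f, rayParity, rayCrossing, cellCenter, List.consecutivePairs, hX', hhigh,
      (hlow.trans_le ha₁).not_gt, (hlow.trans_le ha₂).not_gt]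
  have hfront_last : front.getLast? = back.head? := by
    rw [List.getLast?_map, List.getLast?_append]
    rfl
  rw [← rayParity_map_swap head?_eq_getLast?_map_framePolygon hL, hsplit,
    rayParity_append_tail hfront_last, hfront, hback, zero_add]

end Frame

theorem not_isPreconnected_of_wall {M X X₀ X₁ : ℕ} {white : Set (ℕ × ℕ)} {wall : List (ℕ × ℕ)}
    (hwhite : ∀ w ∈ white, w.1 < M ∧ w.2 < M) (hwall : wall.IsChain SideAdj)
    (hblack : ∀ p ∈ wall, p ∉ white) (hhead : wall.head? = some (X, 0))
    (hlast : wall.getLast? = some (X, M - 1)) (hcol : ∀ p ∈ wall, X₀ ≤ p.1 ∧ p.1 < X₁)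
    {t : Set (ℝ × ℝ)} (ht : t ⊆ ⋃ w ∈ white, cell M w) {a b : ℝ × ℝ} (ha : a ∈ t) (hb : b ∈ t)
    (ha₀ : a ∈ unitSquare) (haX : a.1 < X₀ / M) (hbX : X₁ / M ≤ b.1) : ¬IsPreconnected t := by
  intro htc
  obtain ⟨w, hw, -⟩ := mem_iUnion₂.mp (ht ha)
  have hM : 0 < M := (Nat.zero_le _).trans_lt (hwhite w hw).1
  have hC := isChain_framePolygon hwhite hwall hblack hhead hlast
  have hL := isRectilinear_map_cellCenter (M := M) hC
  have hdisj : Disjoint t (polygonSet ((framePolygon M X wall).map (cellCenter M))) := by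
    refine disjoint_left.mpr fun z hz hzL => ?_
    obtain ⟨w, hw, hzw⟩ := mem_iUnion₂.mp (ht hz)
    exact disjoint_left.mp (disjoint_cell_polygonSet hM hC hw) hzw hzL
  have := rayParity_eq_of_isPreconnected head?_eq_getLast?_map_framePolygon hL htc hdisj ha hb
  rw [rayParity_framePolygon_eq_one hM hL hhead (fun p hp => (hcol p hp).1) ha₀ haX,
    rayParity_framePolygon_eq_zero hM hhead (fun p hp => (hcol p hp).2) hbX] at this
  exact one_ne_zero this

lemma mProd_succ (m : ℕ → ℕ) (n : ℕ) : mProd m (n + 1) = mProd m n * m n :=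
  Finset.prod_range_succ _ _

lemma two_pow_le_mProd {m : ℕ → ℕ} (hm : ∀ k, 2 ≤ m k) (n : ℕ) : 2 ^ n ≤ mProd m n := by
  induction n with
  | zero => simp [mProd]
  | succ n ih => rw [mProd_succ, pow_succ]; exact Nat.mul_le_mul ih (hm n)

section LimitSet

variable {m : ℕ → ℕ} {W : ℕ → Set (ℕ × ℕ)}

lemma lt_mProd_of_mem_whites (hW : ∀ k, ∀ p ∈ W k, p.1 < m k ∧ p.2 < m k) (n : ℕ) :
    ∀ p ∈ whites m W n, p.1 < mProd m n ∧ p.2 < mProd m n := by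
  induction n with
  | zero => simp [whites, mProd]
  | succ n ih =>
    rintro _ ⟨p, hp, r, hr, rfl⟩
    have := ih p hp
    have := hW n r hr
    rw [mProd_succ]
    constructor <;> dsimp only <;> nlinarith

lemma add_notMem_whites_succ (hW : ∀ k, ∀ p ∈ W k, p.1 < m k ∧ p.2 < m k) {n : ℕ}
    {r : ℕ × ℕ} (hr : r.1 < m n ∧ r.2 < m n) (hrW : r ∉ W n) (c j : ℕ) :
    (c * m n, j * m n) + r ∉ whites m W (n + 1) := by
  rintro ⟨p, -, ρ, hρ, heq⟩
  have hρ' := hW n ρ hρ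
  simp only [Prod.ext_iff, Prod.fst_add, Prod.snd_add] at heq
  have h₁ : r.1 = ρ.1 := by
    have := congrArg (· % m n) heq.1
    simpa [Nat.mul_add_mod, Nat.mod_eq_of_lt hr.1, Nat.mod_eq_of_lt hρ'.1] using this
  have h₂ : r.2 = ρ.2 := by
    have := congrArg (· % m n) heq.2
    simpa [Nat.mul_add_mod, Nat.mod_eq_of_lt hr.2, Nat.mod_eq_of_lt hρ'.2] using this
  exact hrW (Prod.ext h₁ h₂ ▸ hρ)

lemma limitSet_subset_unitSquare : limitSet m W ⊆ unitSquare := fun z hz => by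
  simpa [levelSet, whites, mProd, cell, unitSquare] using mem_iInter.mp hz 0

lemma swap_mem_whites (n : ℕ) {p : ℕ × ℕ} (hp : p ∈ whites m W n) :
    p.swap ∈ whites m (fun k => Prod.swap ⁻¹' W k) n := by
  induction n generalizing p with
  | zero => simp_all [whites]
  | succ n ih =>
    obtain ⟨q, hq, r, hr, rfl⟩ := hp
    exact ⟨q.swap, ih hq, r.swap, by simpa using hr, rfl⟩

lemma swap_mem_limitSet {z : ℝ × ℝ} (hz : z ∈ limitSet m W) :
    z.swap ∈ limitSet m (fun k => Prod.swap ⁻¹' W k) := by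
  simp only [limitSet, levelSet, mem_iInter, mem_iUnion] at hz ⊢
  intro n
  obtain ⟨p, hp, hzp⟩ := hz n
  exact ⟨p.swap, swap_mem_whites n hp, hzp.2, hzp.1⟩

end LimitSet

lemma sideAdj_add_left (v : ℕ × ℕ) {p q : ℕ × ℕ} (h : SideAdj p q) : SideAdj (v + p) (v + q) := by
  simp only [SideAdj, Prod.fst_add, Prod.snd_add] at h ⊢
  omega

def stackedCopies (c k N : ℕ) (l : List (ℕ × ℕ)) : List (ℕ × ℕ) :=
  (List.range N).flatMap fun j => l.map ((c * k, j * k) + ·)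

section Stack

variable {i c k : ℕ} {l : List (ℕ × ℕ)}

lemma stackedCopies_succ (N : ℕ) :
    stackedCopies c k (N + 1) l = stackedCopies c k N l ++ l.map ((c * k, N * k) + ·) := by
  simp [stackedCopies, List.range_succ]

lemma head?_stackedCopies (hl : l.head? = some (i, 0)) {N : ℕ} (hN : 0 < N) :
    (stackedCopies c k N l).head? = some (c * k + i, 0) := by
  obtain ⟨N, rfl⟩ := Nat.exists_eq_add_of_lt hN
  simp [stackedCopies, List.range_succ_eq_map, hl]

lemma getLast?_stackedCopies (hk : 0 < k) (hl : l.getLast? = some (i, k - 1)) {N : ℕ}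
    (hN : 0 < N) : (stackedCopies c k N l).getLast? = some (c * k + i, N * k - 1) := by
  obtain ⟨N, rfl⟩ := Nat.exists_eq_add_of_lt hN
  rw [zero_add, stackedCopies_succ, List.getLast?_append, List.getLast?_map, hl]
  simp only [Option.map_some, Option.some_or, Option.some.injEq, Prod.mk_add_mk, Prod.mk.injEq,
    true_and]
  rw [Nat.add_mul, one_mul]
  omega

lemma isChain_stackedCopies (hk : 0 < k) (hl : l.IsChain SideAdj) (hhead : l.head? = some (i, 0))
    (hlast : l.getLast? = some (i, k - 1)) (N : ℕ) : (stackedCopies c k N l).IsChain SideAdj := by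
  induction N with
  | zero => simp [stackedCopies]
  | succ N ih =>
    rw [stackedCopies_succ]
    refine ih.append (List.isChain_map _ |>.mpr (hl.imp fun _ _ => sideAdj_add_left _)) ?_
    rcases N.eq_zero_or_pos with rfl | hN
    · simp [stackedCopies]
    rw [getLast?_stackedCopies hk hlast hN, List.head?_map, hhead]
    rintro _ ⟨⟩ _ ⟨⟩
    have := Nat.mul_pos hN hk
    refine Or.inl ⟨by simp, Or.inl ?_⟩
    show N * k - 1 + 1 = N * k + 0
    omega

lemma exists_of_mem_stackedCopies {N : ℕ} {p : ℕ × ℕ} (hp : p ∈ stackedCopies c k N l) :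
    ∃ j, ∃ r ∈ l, p = (c * k, j * k) + r := by
  obtain ⟨j, -, hj⟩ := List.mem_flatMap.mp hp
  obtain ⟨r, hr, rfl⟩ := List.mem_map.mp hj
  exact ⟨j, r, hr, rfl⟩

end Stack

lemma exists_column_between {m : ℕ → ℕ} (hm : ∀ k, 2 ≤ m k) {x y : ℝ} (hx : 0 ≤ x) (hxy : x < y) :
    ∃ n c : ℕ, x < c / mProd m n ∧ (c + 1) / mProd m n ≤ y := by
  obtain ⟨n, hn⟩ := exists_nat_gt (2 / (y - x))
  have hM : (n : ℝ) < mProd m n := by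
    exact_mod_cast n.lt_two_pow_self.trans_le (two_pow_le_mProd hm n)
  have hM₀ : (0 : ℝ) < mProd m n := (Nat.cast_nonneg n).trans_lt hM
  have h2 : 2 < mProd m n * (y - x) := by
    rw [div_lt_iff₀ (by linarith)] at hn
    nlinarith
  refine ⟨n, ⌊x * mProd m n⌋₊ + 1, ?_, ?_⟩
  · rw [lt_div_iff₀ hM₀]
    exact_mod_cast Nat.lt_floor_add_one _
  · rw [div_le_iff₀ hM₀]
    have := Nat.floor_le (mul_nonneg hx hM₀.le)
    push_cast
    linarith

theorem fst_eq_of_isPreconnected {m : ℕ → ℕ} {W : ℕ → Set (ℕ × ℕ)} (hm : ∀ k, 2 ≤ m k)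
    (hW : ∀ k, ∀ p ∈ W k, p.1 < m k ∧ p.2 < m k)
    (hpath : ∀ k, ∃ i, ∃ l : List (ℕ × ℕ), l.IsChain SideAdj ∧
      (∀ p ∈ l, p ∈ {q : ℕ × ℕ | q.1 < m k ∧ q.2 < m k} \ W k) ∧
      l.head? = some (i, 0) ∧ l.getLast? = some (i, m k - 1))
    {t : Set (ℝ × ℝ)} (ht : t ⊆ limitSet m W) (htc : IsPreconnected t) {a b : ℝ × ℝ}
    (ha : a ∈ t) (hb : b ∈ t) : a.1 = b.1 := by
  wlog hab : a.1 < b.1 generalizing a b with H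
  · rcases (not_lt.mp hab).lt_or_eq with h | h
    · exact (H hb ha h).symm
    · exact h.symm
  exfalso
  have ha₀ := limitSet_subset_unitSquare (ht ha)
  obtain ⟨n, c, hac, hcb⟩ := exists_column_between hm ha₀.1.1 hab
  obtain ⟨i, l, hl, hlW, hhead, hlast⟩ := hpath n
  have hk : 0 < m n := by linarith [hm n]
  have hM : mProd m n * m n = mProd m (n + 1) := (mProd_succ m n).symm
  have hM₀ : 0 < mProd m n := by linarith [two_pow_le_mProd hm n, Nat.one_le_two_pow (n := n)]
  have hscale : ∀ x : ℕ, ((x * m n : ℕ) : ℝ) / mProd m (n + 1) = x / mProd m n := fun x => by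
    rw [← hM]
    push_cast
    exact mul_div_mul_right _ _ (by positivity)
  refine not_isPreconnected_of_wall (X := c * m n + i) (X₀ := c * m n) (X₁ := c * m n + m n)
    (wall := stackedCopies c (m n) (mProd m n) l) (lt_mProd_of_mem_whites hW (n + 1))
    (isChain_stackedCopies hk hl hhead hlast _) ?_ (head?_stackedCopies hhead hM₀)
    (hM ▸ getLast?_stackedCopies hk hlast hM₀) ?_
    (ht.trans (iInter_subset _ (n + 1))) ha hb ha₀ ?_ ?_ htc
  · intro p hp
    obtain ⟨j, r, hr, rfl⟩ := exists_of_mem_stackedCopies hp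
    exact add_notMem_whites_succ hW (hlW r hr).1 (hlW r hr).2 c j
  · intro p hp
    obtain ⟨j, r, hr, rfl⟩ := exists_of_mem_stackedCopies hp
    have := (hlW r hr).1.1
    simp only [Prod.fst_add]
    omega
  · rwa [hscale]
  · rw [← Nat.succ_mul, hscale]
    exact_mod_cast hcb

lemma exists_isChain_sideAdj_of_connected {A : Set (ℕ × ℕ)} (hA : (patternGraph A).Connected)
    {u v : ℕ × ℕ} (hu : u ∈ A) (hv : v ∈ A) :
    ∃ l : List (ℕ × ℕ), l.IsChain SideAdj ∧ (∀ p ∈ l, p ∈ A) ∧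
      l.head? = some u ∧ l.getLast? = some v := by
  obtain ⟨w⟩ := hA.preconnected ⟨u, hu⟩ ⟨v, hv⟩
  refine ⟨w.support.map Subtype.val, List.isChain_map _ |>.mpr w.isChain_adj_support,
    fun p hp => ?_, ?_, ?_⟩
  · obtain ⟨q, -, rfl⟩ := List.mem_map.mp hp
    exact q.2
  · rw [List.head?_map, List.head?_eq_some_head w.support_ne_nil, w.head_support]
    rfl
  · rw [List.getLast?_map, List.getLast?_eq_some_getLast w.support_ne_nil, w.getLast_support]
    rfl

section LabyrinthPattern

variable {m : ℕ} {A : Set (ℕ × ℕ)}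

lemma IsLabyrinthPattern.exists_vertical_crossing_of_compl (hA : IsLabyrinthPattern m A) :
    ∃ i, ∃ l : List (ℕ × ℕ), l.IsChain SideAdj ∧
      (∀ p ∈ l, p ∈ {q : ℕ × ℕ | q.1 < m ∧ q.2 < m} \ ({q | q.1 < m ∧ q.2 < m} \ A)) ∧
      l.head? = some (i, 0) ∧ l.getLast? = some (i, m - 1) := by
  obtain ⟨-, hpat, htree, ⟨i, ⟨htop, hbot⟩, -⟩, -⟩ := hA
  obtain ⟨l, hl, hlA, hhead, hlast⟩ := exists_isChain_sideAdj_of_connected htree.connected hbot htop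
  exact ⟨i, l, hl, fun p hp => ⟨hpat.2 p (hlA p hp), fun h => h.2 (hlA p hp)⟩, hhead, hlast⟩

lemma IsLabyrinthPattern.exists_horizontal_crossing_of_compl (hA : IsLabyrinthPattern m A) :
    ∃ j, ∃ l : List (ℕ × ℕ), l.IsChain SideAdj ∧
      (∀ p ∈ l, p ∈ {q : ℕ × ℕ | q.1 < m ∧ q.2 < m} \
        (Prod.swap ⁻¹' ({q | q.1 < m ∧ q.2 < m} \ A))) ∧
      l.head? = some (j, 0) ∧ l.getLast? = some (j, m - 1) := by
  obtain ⟨-, hpat, htree, -, ⟨j, ⟨hleft, hright⟩, -⟩, -⟩ := hA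
  obtain ⟨l, hl, hlA, hhead, hlast⟩ :=
    exists_isChain_sideAdj_of_connected htree.connected hleft hright
  refine ⟨j, l.map Prod.swap, List.isChain_map _ |>.mpr <| hl.imp fun _ _ => Or.symm, ?_,
    by simp [hhead], by simp [hlast]⟩
  simp only [List.mem_map]
  rintro _ ⟨p, hp, rfl⟩
  exact ⟨(hpat.2 p (hlA p hp)).symm, fun h => h.2 (hlA p hp)⟩

end LabyrinthPattern

end Labyrinth

open Labyrinth in
/-- the limit set generated by the sequence of the complementary patterns
`𝒜̄_k = 𝒮_{m_k} \ 𝒜_k` of a sequence of labyrinth patterns is totally disconnected. -/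
theorem complementary_limitSet_totallyDisconnected (m : ℕ → ℕ) (A : ℕ → Set (ℕ × ℕ))
    (hlab : ∀ k, IsLabyrinthPattern (m k) (A k)) :
    IsTotallyDisconnected
      (limitSet m (fun k => {p : ℕ × ℕ | p.1 < m k ∧ p.2 < m k} \ A k)) := by
  intro t hts htc x hx y hy
  have hm : ∀ k, 2 ≤ m k := fun k => by linarith [(hlab k).1]
  have h₁ : x.1 = y.1 := fst_eq_of_isPreconnected hm (fun k p hp => hp.1)
    (fun k => (hlab k).exists_vertical_crossing_of_compl) hts htc hx hy
  have h₂ : x.2 = y.2 := fst_eq_of_isPreconnected hm (fun k p hp => hp.1.symm)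
    (fun k => (hlab k).exists_horizontal_crossing_of_compl)
    (image_subset_iff.mpr fun z hz => swap_mem_limitSet (hts hz))
    (htc.image _ continuous_swap.continuousOn) (mem_image_of_mem _ hx) (mem_image_of_mem _ hy)
  exact Prod.ext h₁ h₂
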